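/- arXiv:2101.04425 — 12 statements merged into one kernel-verified Lean document; each statement's English description precedes it below -/
import Mathlib

section
/- If every agent's preference list is nonempty, then the matching that assigns each agent a to its single most-preferred program p such that p is some agent's minimum-cost program (formally: let P' = { p*_a : a ∈ A } where p*_a is the cheapest program on a's list, ties broken by a's preference; match each a to its most-preferred program in P' ∩ list(a)) is A-perfect and stable in the flexible-quotas sense. -/
/-- If every agent's preference list is nonempty, the matching that assigns each agent `a`
to its most-preferred program in `P' = { p*_a : a ∈ A }` (where `p*_a` is the cheapest
program on `a`'s list, ties broken by `a`'s preference) is A-perfect (total, along edges)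
and stable in the flexible-quotas sense. -/
theorem stmt1 {A P : Type*}
    (list : A → Finset P) (c : P → ℕ)
    (rankA : A → P → ℕ) (rankP : P → A → ℕ)
    (hstrict : ∀ a p q, p ∈ list a → q ∈ list a → rankA a p = rankA a q → p = q)
    (hne : ∀ a, (list a).Nonempty)
    (pstar : A → P)
    (hmem : ∀ a, pstar a ∈ list a)
    (hmin : ∀ a p, p ∈ list a → c (pstar a) ≤ c p)
    (htie : ∀ a p, p ∈ list a → c p = c (pstar a) → rankA a (pstar a) ≤ rankA a p) :
    ∃ M : A → P,
      -- A-perfect matching along the edges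
      (∀ a, M a ∈ list a) ∧
      -- every agent is assigned a program from P' = { p*_a : a ∈ A }
      (∀ a, ∃ a', M a = pstar a') ∧
      -- each agent gets its most-preferred program in P' ∩ list(a)
      (∀ a p, p ∈ list a → (∃ a', p = pstar a') → rankA a (M a) ≤ rankA a p) ∧
      -- stability (no blocking pair / envy pair)
      (¬ ∃ a p, p ∈ list a ∧ rankA a p < rankA a (M a) ∧
        ∃ a', M a' = p ∧ rankP p a < rankP p a') := by
  classical
  set S : A → Finset P := fun a => (list a).filter (fun p => ∃ a', p = pstar a') with hS
  have hSne : ∀ a, (S a).Nonempty := fun a =>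
    ⟨pstar a, Finset.mem_filter.2 ⟨hmem a, a, rfl⟩⟩
  have hex : ∀ a, ∃ p ∈ S a, ∀ q ∈ S a, rankA a p ≤ rankA a q := fun a =>
    Finset.exists_min_image (S a) (rankA a) (hSne a)
  choose M hMmem hMmin using hex
  have hMlist : ∀ a, M a ∈ list a := fun a => (Finset.mem_filter.1 (hMmem a)).1
  have hMstar : ∀ a, ∃ a', M a = pstar a' := fun a => (Finset.mem_filter.1 (hMmem a)).2
  refine ⟨M, hMlist, hMstar, ?_, ?_⟩
  · intro a p hp hex'
    exact hMmin a p (Finset.mem_filter.2 ⟨hp, hex'⟩)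
  · rintro ⟨a, p, hp, hlt, a', hMa', -⟩
    have : rankA a (M a) ≤ rankA a p := by
      apply hMmin a p (Finset.mem_filter.2 ⟨hp, ?_⟩)
      rw [← hMa']; exact hMstar a'
    omega
end

section
/- The greedy matching M that assigns each agent a to its most-preferred program among P' = { p*_a : a ∈ A } has total cost at most ℓ_p times the optimal total cost of an A-perfect stable matching, where ℓ_p is the maximum number of agents listing any single program (the maximum program preference-list length). -/
/-- ℓ_p-approximation of the greedy algorithm: the matching `M` assigning each agent to its
most-preferred program among `P' = { p*_a : a ∈ A }` has total cost at most `ℓ_p` times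
the total cost of any A-perfect stable matching `N` (in particular, of an optimal one),
where `ℓ_p` bounds the number of agents listing any single program. -/
theorem stmt3 {A P : Type*} [Fintype A] [DecidableEq P]
    (list : A → Finset P) (c : P → ℕ)
    (rankA : A → P → ℕ) (rankP : P → A → ℕ)
    (lp : ℕ)
    (hlp : ∀ p : P, (Finset.univ.filter (fun a : A => p ∈ list a)).card ≤ lp)
    (pstar : A → P)
    (hmem : ∀ a, pstar a ∈ list a)
    (hmin : ∀ a p, p ∈ list a → c (pstar a) ≤ c p)
    (htie : ∀ a p, p ∈ list a → c p = c (pstar a) → rankA a (pstar a) ≤ rankA a p)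
    (M : A → P)                                   -- the greedy matching
    (hMedge : ∀ a, M a ∈ list a)
    (hMP' : ∀ a, ∃ a', M a = pstar a')
    (hMtop : ∀ a p, p ∈ list a → (∃ a', p = pstar a') → rankA a (M a) ≤ rankA a p)
    (N : A → P)                                   -- any A-perfect stable matching
    (hNedge : ∀ a, N a ∈ list a)
    (hNstable : ¬ ∃ a p, p ∈ list a ∧ rankA a p < rankA a (N a) ∧
      ∃ a', N a' = p ∧ rankP p a < rankP p a') :
    ∑ a, c (M a) ≤ lp * ∑ a, c (N a) := by
  classical
  have h1 : ∑ a, c (M a) ≤ lp * ∑ p ∈ Finset.univ.image M, c p := by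
    rw [Finset.sum_comp c M, Finset.mul_sum]
    refine Finset.sum_le_sum fun p hp => ?_
    rw [smul_eq_mul]
    refine Nat.mul_le_mul_right _ (le_trans (Finset.card_le_card ?_) (hlp p))
    intro a ha
    simp only [Finset.mem_filter, Finset.mem_univ, true_and] at ha ⊢
    exact ha ▸ hMedge a
  have h2 : ∑ p ∈ Finset.univ.image M, c p ≤ ∑ p ∈ Finset.univ.image pstar, c p := by
    refine Finset.sum_le_sum_of_subset ?_
    intro p hp
    simp only [Finset.mem_image, Finset.mem_univ, true_and] at hp ⊢
    obtain ⟨a, rfl⟩ := hp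
    obtain ⟨a', h⟩ := hMP' a
    exact ⟨a', h.symm⟩
  have h3 : ∑ p ∈ Finset.univ.image pstar, c p ≤ ∑ a, c (pstar a) := by
    rw [Finset.sum_comp c pstar]
    refine Finset.sum_le_sum fun p hp => ?_
    rw [smul_eq_mul]
    refine Nat.le_mul_of_pos_left _ (Finset.card_pos.2 ?_)
    simp only [Finset.mem_image, Finset.mem_univ, true_and] at hp
    obtain ⟨a, rfl⟩ := hp
    exact ⟨a, by simp⟩
  have h4 : ∑ a, c (pstar a) ≤ ∑ a, c (N a) :=
    Finset.sum_le_sum fun a _ => hmin a (N a) (hNedge a)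
  calc ∑ a, c (M a) ≤ lp * ∑ p ∈ Finset.univ.image M, c p := h1
    _ ≤ lp * ∑ a, c (N a) := Nat.mul_le_mul_left _ ((h2.trans h3).trans h4)
end

section
/- Monotonicity of A-perfect stable matchings in quota-restricted instances: given a flexible-quotas instance with positive integer costs, for t ≤ t', if the Hospital/Residents instance G_t with quotas q_t(p) = ⌊t / c(p)⌋ admits an A-perfect stable matching, then the instance G_{t'} with quotas q_{t'}(p) = ⌊t' / c(p)⌋ also admits an A-perfect stable matching. -/
/-! Break the ties in the preferences in favour of the given A-perfect stable matching `M`: this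
keeps `M` stable and makes all preferences strict. With strict preferences the instance with the
larger quotas has a stable matching `M'` (a Knaster–Tarski fixed point of the deferred-acceptance
operator on sets of edges), which is also stable for the original preferences, and a counting
argument comparing `M` and `M'` shows that raising quotas cannot leave an agent unmatched. -/

/-- Standard Hospital/Residents stability for a (partial) matching `M` with quotas `q`:
`M` is a matching along the edges respecting quotas, and no pair `(a,p)` blocks it,
where `(a,p)` blocks if `a` prefers `p` to `M(a)` (unmatched agents prefer anything
acceptable) and `p` is under-subscribed or prefers `a` to some agent matched to it. -/
def HRStable {A P : Type*} [Fintype A] [DecidableEq P]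
    (list : A → Finset P) (rankA : A → P → ℕ) (rankP : P → A → ℕ)
    (q : P → ℕ) (M : A → Option P) : Prop :=
  (∀ a p, M a = some p → p ∈ list a) ∧
  (∀ p, (Finset.univ.filter (fun a => M a = some p)).card ≤ q p) ∧
  ¬ ∃ a p, p ∈ list a ∧ M a ≠ some p ∧
    (∀ r, M a = some r → rankA a p < rankA a r) ∧
    ((Finset.univ.filter (fun a' => M a' = some p)).card < q p ∨
      ∃ a', M a' = some p ∧ rankP p a < rankP p a')

theorem exists_injOn_refinement {α : Type*} (s : Finset α) (r : α → ℕ) (S : α → Prop) :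
    ∃ r' : α → ℕ, Set.InjOn r' s ∧ (∀ x y, r x < r y → r' x < r' y) ∧
      ∀ x y, S x → ¬ S y → r x ≤ r y → r' x < r' y := by
  classical
  -- lexicographic key `(r x, x ∉ S, position of x in s)`, encoded in base `2 * N`
  set N := s.card + 1
  set e : α → ℕ := fun x => s.toList.idxOf x
  have he : ∀ x, e x < N := fun x => by
    simpa [e, N, Nat.lt_succ_iff] using List.idxOf_le_length (l := s.toList) (a := x)
  let r' : α → ℕ := fun x => r x * (2 * N) + ((if S x then 0 else N) + e x)
  have hkey : ∀ x, (if S x then 0 else N) + e x < 2 * N := fun x => by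
    have := he x; split_ifs <;> omega
  have hmono : ∀ x y, r x < r y → r' x < r' y := fun x y hxy => by
    have : r x * (2 * N) + 2 * N ≤ r y * (2 * N) := by
      simpa [Nat.succ_mul] using Nat.mul_le_mul_right (2 * N) (Nat.succ_le_of_lt hxy)
    have := hkey x
    simp only [r']; omega
  have hfav : ∀ x y, S x → ¬ S y → r x ≤ r y → r' x < r' y := fun x y hx hy hxy => by
    have := Nat.mul_le_mul_right (2 * N) hxy
    have := he x
    simp only [r', if_pos hx, if_neg hy]; omega
  refine ⟨r', fun x hx y hy hxy => ?_, hmono, hfav⟩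
  have hr : r x = r y := by
    by_contra hne
    rcases lt_or_gt_of_ne hne with h | h
    · exact (hmono x y h).ne hxy
    · exact (hmono y x h).ne' hxy
  have hS : S x ↔ S y := by
    constructor <;> intro h <;> by_contra h'
    · exact (hfav x y h h' hr.le).ne hxy
    · exact (hfav y x h h' hr.ge).ne' hxy
  have hexy : e x = e y := by
    simp only [r', hr, hS] at hxy; omega
  exact (List.idxOf_inj (Finset.mem_toList.mpr hx)).mp hexy

theorem exists_option_eq_some_iff {α β : Type*} {R : α → β → Prop}
    (hR : ∀ a b b', R a b → R a b' → b = b') : ∃ f : α → Option β, ∀ a b, f a = some b ↔ R a b := by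
  classical
  refine ⟨fun a => if h : ∃ b, R a b then some h.choose else none, fun a b => ?_⟩
  by_cases h : ∃ b, R a b
  · simp only [dif_pos h, Option.some.injEq]
    exact ⟨fun hb => hb ▸ h.choose_spec, hR a _ _ h.choose_spec⟩
  · simp only [dif_neg h, reduceCtorEq, false_iff]
    exact fun hb => h ⟨b, hb⟩

section Existence

/- In the fixed-point construction of a stable matching, `X` is the set of edges not rejected by
their program and `agentAccepted list rankA X` the set of edges not rejected by their agent. -/

variable {A P : Type*} {list : A → Finset P} {rankA : A → P → ℕ} {rankP : P → A → ℕ} {q : P → ℕ}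

variable (list rankA) in
def agentAccepted (X : Set (A × P)) : Set (A × P) :=
  {e | e.2 ∈ list e.1 ∧ ∀ p, (e.1, p) ∈ X → rankA e.1 e.2 ≤ rankA e.1 p}

theorem agentAccepted_anti : Antitone (agentAccepted list rankA) :=
  fun _ _ hXX' _ he => ⟨he.1, fun p hp => he.2 p (hXX' hp)⟩

theorem eq_of_mem_inter_agentAccepted (hrankA : ∀ a, Set.InjOn (rankA a) (list a))
    {X : Set (A × P)} {a : A} {p p' : P} (hp : (a, p) ∈ X ∩ agentAccepted list rankA X)
    (hp' : (a, p') ∈ X ∩ agentAccepted list rankA X) : p = p' :=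
  hrankA a hp.2.1 hp'.2.1 (le_antisymm (hp.2.2 p' hp'.1) (hp'.2.2 p hp.1))

theorem exists_mem_inter_agentAccepted_le {X : Set (A × P)} (hXl : ∀ e ∈ X, e.2 ∈ list e.1)
    {a : A} {p : P} (hp : (a, p) ∈ X) :
    ∃ p', (a, p') ∈ X ∩ agentAccepted list rankA X ∧ rankA a p' ≤ rankA a p := by
  classical
  have hmem : ∀ {p}, (a, p) ∈ X → p ∈ (list a).filter fun p => (a, p) ∈ X :=
    fun hp => Finset.mem_filter.mpr ⟨hXl _ hp, hp⟩
  obtain ⟨p', hp', hmin⟩ := Finset.exists_min_image _ (rankA a) ⟨p, hmem hp⟩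
  rw [Finset.mem_filter] at hp'
  exact ⟨p', ⟨hp'.2, hp'.1, fun p'' hp'' => hmin p'' (hmem hp'')⟩, hmin p (hmem hp)⟩

variable [Fintype A]

open Classical in
variable (rankP) in
noncomputable def betterCount (Y : Set (A × P)) (p : P) (a : A) : ℕ :=
  (Finset.univ.filter fun b => (b, p) ∈ Y ∧ rankP p b < rankP p a).card

variable (list rankP q) in
def programAccepted (Y : Set (A × P)) : Set (A × P) :=
  {e | e.2 ∈ list e.1 ∧ betterCount rankP Y e.2 e.1 < q e.2}

theorem betterCount_mono {Y Y' : Set (A × P)} (hYY' : Y ⊆ Y') (p : P) (a : A) :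
    betterCount rankP Y p a ≤ betterCount rankP Y' p a :=
  Finset.card_le_card fun b hb => by
    simp only [Finset.mem_filter] at hb ⊢
    exact ⟨hb.1, hYY' hb.2.1, hb.2.2⟩

theorem betterCount_le_of_lt (Y : Set (A × P)) {p : P} {a b : A} (hab : rankP p a < rankP p b) :
    betterCount rankP Y p a ≤ betterCount rankP Y p b :=
  Finset.card_le_card fun c hc => by
    simp only [Finset.mem_filter] at hc ⊢
    exact ⟨hc.1, hc.2.1, hc.2.2.trans hab⟩

theorem betterCount_lt_of_lt {Y : Set (A × P)} {p : P} {a b : A} (ha : (a, p) ∈ Y)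
    (hab : rankP p a < rankP p b) : betterCount rankP Y p a < betterCount rankP Y p b := by
  refine Finset.card_lt_card ((Finset.ssubset_iff_of_subset fun c hc => ?_).mpr ⟨a, ?_, ?_⟩)
  · simp only [Finset.mem_filter] at hc ⊢
    exact ⟨hc.1, hc.2.1, hc.2.2.trans hab⟩
  · simp [ha, hab]
  · simp

theorem programAccepted_anti : Antitone (programAccepted list rankP q) :=
  fun _ _ hYY' e he => ⟨he.1, (betterCount_mono hYY' e.2 e.1).trans_lt he.2⟩

variable (list rankA rankP q) in
def acceptanceOp : Set (A × P) →o Set (A × P) :=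
  ⟨programAccepted list rankP q ∘ agentAccepted list rankA,
    programAccepted_anti.comp agentAccepted_anti⟩

theorem card_le_of_betterCount_lt (hrankP : ∀ p, Function.Injective (rankP p))
    {Y : Set (A × P)} {p : P} {n : ℕ} {K : Finset A}
    (hK : ∀ a ∈ K, (a, p) ∈ Y ∧ betterCount rankP Y p a < n) : K.card ≤ n := by
  refine (Finset.card_le_card_of_injOn (betterCount rankP Y p) (fun a ha => ?_)
    fun a ha b hb hab => ?_).trans (Finset.card_range n).le
  · exact Finset.mem_range.mpr (hK a ha).2
  · by_contra hne
    rcases lt_or_gt_of_ne ((hrankP p).ne hne) with h | h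
    · exact (betterCount_lt_of_lt (hK a ha).1 h).ne hab
    · exact (betterCount_lt_of_lt (hK b hb).1 h).ne' hab

/-- The best `Y`-agent outside `K` would have fewer than `n` agents of `Y` ranked above it. -/
theorem le_card_of_le_betterCount {Y : Set (A × P)} {p : P} {n : ℕ} {K : Finset A}
    (hK : ∀ b, (b, p) ∈ Y → betterCount rankP Y p b < n → b ∈ K) {a : A}
    (ha : n ≤ betterCount rankP Y p a) : n ≤ K.card := by
  classical
  by_contra! hlt
  obtain ⟨b, hb, hbK⟩ := Finset.exists_mem_notMem_of_card_lt_card (hlt.trans_le ha)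
  have hbY : (b, p) ∈ Y := (Finset.mem_filter.mp hb).2.1
  obtain ⟨b₀, hb₀, hmin⟩ := Finset.exists_min_image
    (Finset.univ.filter fun b => (b, p) ∈ Y ∧ b ∉ K) (rankP p) ⟨b, by simp [hbY, hbK]⟩
  simp only [Finset.mem_filter, Finset.mem_univ, true_and] at hb₀ hmin
  have hbetter : betterCount rankP Y p b₀ ≤ K.card := Finset.card_le_card fun c hc => by
    simp only [Finset.mem_filter, Finset.mem_univ, true_and] at hc
    by_contra hcK
    exact (hmin c ⟨hc.1, hcK⟩).not_gt hc.2
  exact hb₀.2 (hK b₀ hb₀.1 (hbetter.trans_lt hlt))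

theorem exists_hrStable [DecidableEq P] (hrankA : ∀ a, Set.InjOn (rankA a) (list a))
    (hrankP : ∀ p, Function.Injective (rankP p)) : ∃ M, HRStable list rankA rankP q M := by
  set X := (acceptanceOp list rankA rankP q).lfp
  set Y := agentAccepted list rankA X
  have hX : ∀ a p, (a, p) ∈ X ↔ p ∈ list a ∧ betterCount rankP Y p a < q p := fun a p =>
    Set.ext_iff.mp (acceptanceOp list rankA rankP q).map_lfp.symm (a, p)
  have hXl : ∀ e ∈ X, e.2 ∈ list e.1 := fun e he => ((hX e.1 e.2).mp he).1
  obtain ⟨M, hM⟩ := exists_option_eq_some_iff (R := fun a p => (a, p) ∈ X ∩ Y)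
    fun _ _ _ => eq_of_mem_inter_agentAccepted hrankA
  have hfiber : ∀ a p, M a = some p ↔ (a, p) ∈ Y ∧ betterCount rankP Y p a < q p :=
    fun a p => (hM a p).trans ⟨fun h => ⟨h.2, ((hX a p).mp h.1).2⟩,
      fun h => ⟨(hX a p).mpr ⟨h.1.1, h.2⟩, h.1⟩⟩
  refine ⟨M, fun a p h => hXl _ ((hM a p).mp h).1,
    fun p => card_le_of_betterCount_lt (Y := Y) (p := p) hrankP fun a ha => ?_, ?_⟩
  · exact (hfiber a p).mp (Finset.mem_filter.mp ha).2
  rintro ⟨a, p, hpl, -, hpref, hblock⟩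
  by_cases hx : (a, p) ∈ X
  · obtain ⟨p', hp', hle⟩ := exists_mem_inter_agentAccepted_le hXl hx
    exact (hpref p' ((hM a p').mpr hp')).not_ge hle
  have hrej : q p ≤ betterCount rankP Y p a := not_lt.mp fun h => hx ((hX a p).mpr ⟨hpl, h⟩)
  rcases hblock with hunder | ⟨a', ha', hlt⟩
  · refine hunder.not_ge (le_card_of_le_betterCount (fun b hbY hb => ?_) hrej)
    exact Finset.mem_filter.mpr ⟨Finset.mem_univ b, (hfiber b p).mpr ⟨hbY, hb⟩⟩
  · exact ((betterCount_le_of_lt Y hlt).trans_lt ((hfiber a' p).mp ha').2).not_ge hrej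

end Existence

namespace HRStable

variable {A P : Type*} [Fintype A] [DecidableEq P] {list : A → Finset P}
  {rankA rankA' : A → P → ℕ} {rankP rankP' : P → A → ℕ} {q : P → ℕ} {M : A → Option P}
  {a : A} {p : P}

theorem of_refinement (hA : ∀ a p r, rankA a p < rankA a r → rankA' a p < rankA' a r)
    (hP : ∀ p a b, rankP p a < rankP p b → rankP' p a < rankP' p b)
    (h : HRStable list rankA' rankP' q M) : HRStable list rankA rankP q M := by
  refine ⟨h.1, h.2.1, ?_⟩
  rintro ⟨a, p, hpl, hne, hpref, hblock⟩
  refine h.2.2 ⟨a, p, hpl, hne, fun r hr => hA a p r (hpref r hr), ?_⟩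
  rcases hblock with hunder | ⟨a', ha', hlt⟩
  · exact Or.inl hunder
  · exact Or.inr ⟨a', ha', hP p a a' hlt⟩

theorem refinement_of_favoring
    (hA : ∀ a r p, M a = some r → M a ≠ some p → rankA a r ≤ rankA a p →
      rankA' a r < rankA' a p)
    (hP : ∀ p a b, M a = some p → M b ≠ some p → rankP p a ≤ rankP p b →
      rankP' p a < rankP' p b)
    (h : HRStable list rankA rankP q M) : HRStable list rankA' rankP' q M := by
  refine ⟨h.1, h.2.1, ?_⟩
  rintro ⟨a, p, hpl, hne, hpref, hblock⟩
  refine h.2.2 ⟨a, p, hpl, hne, fun r hr => ?_, ?_⟩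
  · by_contra! hle
    exact lt_asymm (hpref r hr) (hA a r p hr hne hle)
  · rcases hblock with hunder | ⟨a', ha', hlt⟩
    · exact Or.inl hunder
    · refine Or.inr ⟨a', ha', ?_⟩
      by_contra! hle
      exact lt_asymm hlt (hP p a' a ha' hne hle)

theorem le_card_of_prefers (h : HRStable list rankA rankP q M) (hpl : p ∈ list a)
    (hne : M a ≠ some p) (hpref : ∀ r, M a = some r → rankA a p < rankA a r) :
    q p ≤ (Finset.univ.filter fun b => M b = some p).card :=
  not_lt.mp fun hunder => h.2.2 ⟨a, p, hpl, hne, hpref, Or.inl hunder⟩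

theorem rankP_le_of_prefers (h : HRStable list rankA rankP q M) (hpl : p ∈ list a)
    (hne : M a ≠ some p) (hpref : ∀ r, M a = some r → rankA a p < rankA a r) {a' : A}
    (ha' : M a' = some p) : rankP p a' ≤ rankP p a :=
  not_lt.mp fun hlt => h.2.2 ⟨a, p, hpl, hne, hpref, Or.inr ⟨a', ha', hlt⟩⟩

theorem rankA_lt_of_displaces (hrankA : ∀ a, Set.InjOn (rankA a) (list a))
    (hrankP : ∀ p, Function.Injective (rankP p)) {q' : P → ℕ} {M' : A → Option P}
    (hM : HRStable list rankA rankP q M) (hM' : HRStable list rankA rankP q' M') {b : A} {r : P}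
    (hbM : M b = some p) (hbpref : ∀ r', M' b = some r' → rankA b p < rankA b r')
    (haM' : M' a = some p) (haM : M a = some r) (hrp : r ≠ p) : rankA a r < rankA a p := by
  have hbp : M' b ≠ some p := fun h => (hbpref p h).false
  have hab : a ≠ b := by rintro rfl; exact hbp haM'
  have hP : rankP p a < rankP p b :=
    (hM'.rankP_le_of_prefers (hM.1 b p hbM) hbp hbpref haM').lt_of_ne ((hrankP p).ne hab)
  have hpl : p ∈ list a := hM'.1 a p haM'
  refine lt_of_le_of_ne (not_lt.mp fun hlt => hM.2.2 ⟨a, p, hpl, ?_, ?_, Or.inr ⟨b, hbM, hP⟩⟩)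
    ((hrankA a).ne (hM.1 a r haM) hpl hrp)
  · simpa [haM] using hrp
  · simpa [haM] using hlt

/-- Let `D` be the agents strictly worse off in `M'` than in `M`, and `Q` their `M`-programs.
Every program of `Q` is full in `M'`, and anyone `M'` sends to a program of `Q` either sits there
in `M` too or belongs to `D`; so `M'` places at least `∑ q'` agents inside the `≤ ∑ q` agents that
`M` places in `Q`, which leaves no room for an agent that `M'` leaves unmatched. -/
theorem forall_isSome_of_le (hrankA : ∀ a, Set.InjOn (rankA a) (list a))
    (hrankP : ∀ p, Function.Injective (rankP p)) {q' : P → ℕ} (hq : ∀ p, q p ≤ q' p)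
    {M' : A → Option P} (hM : HRStable list rankA rankP q M) (hMp : ∀ a, (M a).isSome)
    (hM' : HRStable list rankA rankP q' M') : ∀ a, (M' a).isSome := by
  classical
  by_contra! ⟨a₀, ha₀⟩
  replace ha₀ : M' a₀ = none := Option.not_isSome_iff_eq_none.mp ha₀
  choose m hm using fun a => Option.isSome_iff_exists.mp (hMp a)
  have hml : ∀ a, m a ∈ list a := fun a => hM.1 a _ (hm a)
  set D := Finset.univ.filter fun a => ∀ p, M' a = some p → rankA a (m a) < rankA a p
  have hD : ∀ {a}, a ∈ D → ∀ p, M' a = some p → rankA a (m a) < rankA a p :=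
    fun ha => (Finset.mem_filter.mp ha).2
  have hD_ne : ∀ {a}, a ∈ D → M' a ≠ some (m a) := fun ha he => (hD ha _ he).false
  have hD_closed : ∀ {a b}, b ∈ D → M' a = some (m b) → m a ≠ m b → a ∈ D :=
    fun {a b} hb ha hab => by
      simpa [D, ha] using hM.rankA_lt_of_displaces hrankA hrankP hM' (hm b) (hD hb) ha (hm a) hab
  set Q := D.image m
  set T := Q.biUnion fun p => Finset.univ.filter fun a => M' a = some p
  set U := Finset.univ.filter fun a => m a ∈ Q
  have ha₀D : a₀ ∈ D := by simp [D, ha₀]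
  have hTU : T ⊂ U := by
    refine Finset.ssubset_iff_of_subset (fun a ha => ?_) |>.mpr ⟨a₀, ?_, ?_⟩
    · simp only [T, Q, Finset.mem_biUnion, Finset.mem_image, Finset.mem_filter,
        Finset.mem_univ, true_and] at ha
      obtain ⟨_, ⟨b, hb, rfl⟩, ha⟩ := ha
      by_cases hab : m a = m b
      · simpa [U, Q, hab] using ⟨b, hb, rfl⟩
      · simpa [U, Q] using ⟨a, hD_closed hb ha hab, rfl⟩
    · simpa [U, Q] using ⟨a₀, ha₀D, rfl⟩
    · simp [T, ha₀]
  have hT : ∑ p ∈ Q, q' p ≤ T.card := by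
    rw [Finset.card_biUnion]
    · refine Finset.sum_le_sum fun p hp => ?_
      obtain ⟨b, hb, rfl⟩ := Finset.mem_image.mp hp
      exact hM'.le_card_of_prefers (hml b) (hD_ne hb) (hD hb)
    · intro p _ p' _ hpp'
      refine Finset.disjoint_left.mpr fun a ha ha' => hpp' ?_
      simp only [Finset.mem_filter] at ha ha'
      exact Option.some_injective _ (ha.2.symm.trans ha'.2)
  have hU : U.card ≤ ∑ p ∈ Q, q p := by
    rw [Finset.card_eq_sum_card_fiberwise (s := U) (t := Q) (f := m)
      fun a ha => (Finset.mem_filter.mp ha).2]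
    refine Finset.sum_le_sum fun p _ => (Finset.card_le_card fun a ha => ?_).trans (hM.2.1 p)
    simp only [Finset.mem_filter, Finset.mem_univ, true_and] at ha ⊢
    rw [hm, ha.2]
  have := Finset.sum_le_sum fun p (_ : p ∈ Q) => hq p
  have := Finset.card_lt_card hTU
  omega

end HRStable

theorem stmt6_general {A P : Type*} [Fintype A] [DecidableEq P]
    (list : A → Finset P) (rankA : A → P → ℕ) (rankP : P → A → ℕ)
    (c : P → ℕ)
    (t t' : ℕ) (htt : t ≤ t')
    (h : ∃ M : A → Option P,
      HRStable list rankA rankP (fun p => t / c p) M ∧ ∀ a, (M a).isSome) :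
    ∃ M' : A → Option P,
      HRStable list rankA rankP (fun p => t' / c p) M' ∧ ∀ a, (M' a).isSome := by
  obtain ⟨M, hM, hMp⟩ := h
  choose rankA' hrankA'_inj hrankA'_mono hrankA'_fav using
    fun a => exists_injOn_refinement (list a) (rankA a) fun p => M a = some p
  choose rankP' hrankP'_inj hrankP'_mono hrankP'_fav using
    fun p => exists_injOn_refinement Finset.univ (rankP p) fun a => M a = some p
  have hrankP'_inj : ∀ p, Function.Injective (rankP' p) := fun p =>
    Set.injOn_univ.mp (by simpa using hrankP'_inj p)
  have hM_refined : HRStable list rankA' rankP' (fun p => t / c p) M :=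
    hM.refinement_of_favoring hrankA'_fav hrankP'_fav
  obtain ⟨M', hM'⟩ := exists_hrStable (q := fun p => t' / c p) hrankA'_inj hrankP'_inj
  exact ⟨M', hM'.of_refinement hrankA'_mono hrankP'_mono,
    hM_refined.forall_isSome_of_le hrankA'_inj hrankP'_inj (fun _ => Nat.div_le_div_right htt)
      hMp hM'⟩

/-- Monotonicity of A-perfect stable matchings in the quota-restricted instances `G_t`:
with positive integer costs, if `t ≤ t'` and the HR instance with quotas `⌊t/c(p)⌋`
admits an A-perfect stable matching, then so does the instance with quotas `⌊t'/c(p)⌋`. -/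
theorem stmt6 {A P : Type*} [Fintype A] [DecidableEq P]
    (list : A → Finset P) (rankA : A → P → ℕ) (rankP : P → A → ℕ)
    (c : P → ℕ) (hc : ∀ p, 0 < c p)
    (t t' : ℕ) (htt : t ≤ t')
    (h : ∃ M : A → Option P,
      HRStable list rankA rankP (fun p => t / c p) M ∧ ∀ a, (M a).isSome) :
    ∃ M' : A → Option P,
      HRStable list rankA rankP (fun p => t' / c p) M' ∧ ∀ a, (M' a).isSome :=
  stmt6_general list rankA rankP c t t' htt h
end

section
/- The minimum achievable maximum per-program cost of an A-perfect stable matching equals the least t ∈ [0, |A|·c_max] such that the Hospital/Residents instance G_t with quotas ⌊t/c(p)⌋ admits an A-perfect stable matching; in particular if M* is a min-max optimal A-perfect stable matching with value t* = max_p c(p)|M*(p)|, then G_{t*} admits an A-perfect stable matching and no G_t with t < t* does. -/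
def nMatched {A P : Type*} [Fintype A] [DecidableEq P] (M : A → P) (p : P) : ℕ :=
  (Finset.univ.filter (fun a => M a = p)).card

/-- Maximum per-program cost of a total matching. -/
def maxCost {A P : Type*} [Fintype A] [Fintype P] [DecidableEq P]
    (c : P → ℕ) (M : A → P) : ℕ :=
  Finset.univ.sup (fun p => c p * nMatched M p)

/-- Flexible-quotas stability (envy-freeness) for a total matching. -/
def FlexStable {A P : Type*} (list : A → Finset P)
    (rankA : A → P → ℕ) (rankP : P → A → ℕ) (M : A → P) : Prop :=
  ¬ ∃ a p, p ∈ list a ∧ rankA a p < rankA a (M a) ∧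
    ∃ a', M a' = p ∧ rankP p a < rankP p a'

lemma maxCost_term {A P : Type*} [Fintype A] [Fintype P] [DecidableEq P]
    (c : P → ℕ) (M : A → P) (p : P) : c p * nMatched M p ≤ maxCost c M := by
  unfold maxCost
  exact Finset.le_sup (f := fun p => c p * nMatched M p) (Finset.mem_univ p)

/-- Correctness of the binary search for the min-max problem: if `M*` is an A-perfect
stable (flexible-quotas) matching minimizing the max per-program cost, with value
`t* = max_p c(p)|M*(p)|`, then `t*` lies in `[0, |A|·c_max]`, the HR instance `G_{t*}`
with quotas `⌊t*/c(p)⌋` admits an A-perfect stable matching, and no `G_t` with `t < t*`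
does.  Hence `t*` is the least such threshold. -/
theorem stmt7 {A P : Type*} [Fintype A] [Fintype P] [DecidableEq P]
    (list : A → Finset P) (rankA : A → P → ℕ) (rankP : P → A → ℕ)
    (c : P → ℕ) (hc : ∀ p, 0 < c p)
    (Mstar : A → P)
    (hMedge : ∀ a, Mstar a ∈ list a)
    (hMst : FlexStable list rankA rankP Mstar)
    (hMopt : ∀ M : A → P, (∀ a, M a ∈ list a) → FlexStable list rankA rankP M →
      maxCost c Mstar ≤ maxCost c M) :
    maxCost c Mstar ≤ Fintype.card A * Finset.univ.sup c ∧
    (∃ M : A → Option P,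
      HRStable list rankA rankP (fun p => maxCost c Mstar / c p) M ∧ ∀ a, (M a).isSome) ∧
    (∀ t < maxCost c Mstar, ¬ ∃ M : A → Option P,
      HRStable list rankA rankP (fun p => t / c p) M ∧ ∀ a, (M a).isSome) := by
  classical
  set t := maxCost c Mstar with ht
  refine ⟨?_, ?_, ?_⟩
  · -- bound
    apply Finset.sup_le
    intro p _
    have h1 : c p ≤ Finset.univ.sup c := Finset.le_sup (Finset.mem_univ p)
    have h2 : nMatched Mstar p ≤ Fintype.card A := by
      unfold nMatched
      exact (Finset.card_filter_le _ _).trans (le_of_eq (Finset.card_univ))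
    calc c p * nMatched Mstar p ≤ (Finset.univ.sup c) * Fintype.card A :=
          Nat.mul_le_mul h1 h2
      _ = Fintype.card A * Finset.univ.sup c := Nat.mul_comm _ _
  · -- existence of an A-perfect HR-stable matching in G_{t*}
    -- Good matchings
    have hGood : ∃ n : ℕ, ∃ M : A → P, ((∀ a, M a ∈ list a) ∧
        FlexStable list rankA rankP M ∧ maxCost c M ≤ t) ∧
        (∑ a, rankA a (M a)) = n :=
      ⟨∑ a, rankA a (Mstar a), Mstar, ⟨hMedge, hMst, le_refl t⟩, rfl⟩
    obtain ⟨M, ⟨hMe, hMf, hMc⟩, hMn⟩ := Nat.find_spec hGood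
    have hmin : ∀ M' : A → P, (∀ a, M' a ∈ list a) →
        FlexStable list rankA rankP M' → maxCost c M' ≤ t →
        (∑ a, rankA a (M a)) ≤ (∑ a, rankA a (M' a)) := by
      intro M' h1 h2 h3
      rw [hMn]
      exact Nat.find_min' hGood ⟨M', ⟨h1, h2, h3⟩, rfl⟩
    refine ⟨fun a => some (M a), ⟨?_, ?_, ?_⟩, fun a => rfl⟩
    · intro a p hp
      have h : M a = p := by simpa using hp
      rw [← h]; exact hMe a
    · intro p
      have hcard : (Finset.univ.filter (fun a => some (M a) = some p)).card
          = nMatched M p := by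
        unfold nMatched; congr 1; apply Finset.filter_congr; intro a _; simp
      rw [hcard, Nat.le_div_iff_mul_le (hc p), Nat.mul_comm]
      exact (maxCost_term c M p).trans hMc
    · rintro ⟨a, p, hpl, hne, hpref, hblock⟩
      have hMane : M a ≠ p := fun h => hne (by simp [h])
      have hlt : rankA a p < rankA a (M a) := hpref (M a) rfl
      rcases hblock with hund | ⟨a', ha', hrk⟩
      swap
      · -- envy case contradicts flex-stability of M
        have ha'' : M a' = p := by simpa using ha'
        exact hMf ⟨a, p, hpl, hlt, a', ha'', hrk⟩
      -- undersubscription case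
      have hcard : (Finset.univ.filter (fun a' => some (M a') = some p)).card
          = nMatched M p := by
        unfold nMatched; congr 1; apply Finset.filter_congr; intro b _; simp
      rw [hcard] at hund
      -- set of agents preferring p
      set T := Finset.univ.filter (fun b => p ∈ list b ∧ rankA b p < rankA b (M b))
        with hT
      have haT : a ∈ T := by simp [hT, hpl, hlt]
      obtain ⟨a0, ha0T, ha0min⟩ := Finset.exists_min_image T (rankP p) ⟨a, haT⟩
      have ha0l : p ∈ list a0 := (Finset.mem_filter.mp ha0T).2.1
      have ha0lt : rankA a0 p < rankA a0 (M a0) := (Finset.mem_filter.mp ha0T).2.2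
      have ha0ne : M a0 ≠ p := fun h => absurd ha0lt (by rw [h]; exact lt_irrefl _)
      set M' := Function.update M a0 p with hM'
      have hM'a0 : M' a0 = p := Function.update_self _ _ _
      have hM'other : ∀ b, b ≠ a0 → M' b = M b := fun b hb =>
        Function.update_of_ne hb _ _
      -- M' is good with lower rank sum
      have hM'e : ∀ b, M' b ∈ list b := by
        intro b
        by_cases hb : b = a0
        · subst hb; rw [hM'a0]; exact ha0l
        · rw [hM'other b hb]; exact hMe b
      have hM'f : FlexStable list rankA rankP M' := by
        rintro ⟨b, q, hql, hqlt, b', hb', hrk⟩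
        by_cases hb'0 : b' = a0
        · have hq : q = p := by rw [← hb', hb'0, hM'a0]
          subst hq
          rw [hb'0] at hrk
          by_cases hb0 : b = a0
          · rw [hb0, hM'a0] at hqlt; exact absurd hqlt (lt_irrefl _)
          · rw [hM'other b hb0] at hqlt
            have hbT : b ∈ T := by simp [hT, hql, hqlt]
            exact absurd hrk (not_lt.mpr (ha0min b hbT))
        · rw [hM'other b' hb'0] at hb'
          by_cases hb0 : b = a0
          · rw [hb0] at hql hqlt hrk
            rw [hM'a0] at hqlt
            exact hMf ⟨a0, q, hql, hqlt.trans ha0lt, b', hb', hrk⟩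
          · rw [hM'other b hb0] at hqlt
            exact hMf ⟨b, q, hql, hqlt, b', hb', hrk⟩
      have hM'c : maxCost c M' ≤ t := by
        apply Finset.sup_le
        intro q _
        by_cases hq : q = p
        · subst hq
          have hsub : Finset.univ.filter (fun b => M' b = q) ⊆
              insert a0 (Finset.univ.filter (fun b => M b = q)) := by
            intro b hb
            rw [Finset.mem_filter] at hb
            by_cases hb0 : b = a0
            · exact Finset.mem_insert.mpr (Or.inl hb0)
            · rw [hM'other b hb0] at hb
              exact Finset.mem_insert.mpr (Or.inr (Finset.mem_filter.mpr
                ⟨Finset.mem_univ _, hb.2⟩))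
          have hle : nMatched M' q ≤ nMatched M q + 1 :=
            (Finset.card_le_card hsub).trans (Finset.card_insert_le _ _)
          have h2 : nMatched M q + 1 ≤ t / c q := hund
          calc c q * nMatched M' q ≤ c q * (nMatched M q + 1) :=
                Nat.mul_le_mul_left _ hle
            _ ≤ c q * (t / c q) := Nat.mul_le_mul_left _ h2
            _ ≤ t := Nat.mul_div_le t (c q)
        · have hsub : Finset.univ.filter (fun b => M' b = q) ⊆
              Finset.univ.filter (fun b => M b = q) := by
            intro b hb
            rw [Finset.mem_filter] at hb ⊢
            refine ⟨hb.1, ?_⟩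
            have hb0 : b ≠ a0 := by
              rintro rfl
              exact hq (hM'a0 ▸ hb.2.symm ▸ rfl)
            rw [← hM'other b hb0]; exact hb.2
          have hle : nMatched M' q ≤ nMatched M q := Finset.card_le_card hsub
          calc c q * nMatched M' q ≤ c q * nMatched M q := Nat.mul_le_mul_left _ hle
            _ ≤ t := (maxCost_term c M q).trans hMc
      have hsumlt : (∑ b, rankA b (M' b)) < ∑ b, rankA b (M b) := by
        apply Finset.sum_lt_sum
        · intro b _
          by_cases hb0 : b = a0
          · subst hb0; rw [hM'a0]; exact le_of_lt ha0lt
          · rw [hM'other b hb0]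
        · exact ⟨a0, Finset.mem_univ _, by rw [hM'a0]; exact ha0lt⟩
      exact absurd (hmin M' hM'e hM'f hM'c) (not_le.mpr hsumlt)
  · -- no smaller t works
    rintro t' ht' ⟨M, ⟨he, hq, hnb⟩, hsome⟩
    set N := fun a => (M a).get (hsome a) with hN
    have hMN : ∀ a, M a = some (N a) := fun a => (Option.some_get (hsome a)).symm
    have hNe : ∀ a, N a ∈ list a := fun a => he a (N a) (hMN a)
    have hNf : FlexStable list rankA rankP N := by
      rintro ⟨a, p, hpl, hlt, a', ha', hrk⟩
      apply hnb
      refine ⟨a, p, hpl, ?_, ?_, Or.inr ⟨a', by rw [hMN a', ha'], hrk⟩⟩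
      · rw [hMN a]
        intro h
        have : N a = p := by simpa using h
        rw [this] at hlt; exact absurd hlt (lt_irrefl _)
      · intro r hr
        rw [hMN a] at hr
        have : N a = r := by simpa using hr
        rw [← this]; exact hlt
    have hNc : maxCost c N ≤ t' := by
      apply Finset.sup_le
      intro p _
      have hcard : nMatched N p =
          (Finset.univ.filter (fun a => M a = some p)).card := by
        unfold nMatched; congr 1; apply Finset.filter_congr; intro a _
        simp [hMN a]
      have h1 : nMatched N p ≤ t' / c p := hcard ▸ hq p
      calc c p * nMatched N p ≤ c p * (t' / c p) := Nat.mul_le_mul_left _ h1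
        _ ≤ t' := Nat.mul_div_le t' (c p)
    exact absurd ((hMopt N hNe hNf).trans hNc) (not_le.mpr ht')
end

section
/- Let G be an HR instance, M a stable matching in G, and for each program p define Barrier(p) as the most-preferred agent a (by p) among agents matched in M that prefer p to M(a), if one exists. If a is unmatched in M and p prefers Barrier(p) to a, then no stable extension M' ⊇ M (a matching containing M, possibly violating quotas, with no envy pair) matches a to p. -/
/-- Barrier lemma: let `M` be a stable matching of an HR instance and `b = Barrier(p)`,
i.e. the agent most preferred by `p` among matched agents preferring `p` to their
`M`-partner. If agent `a` is unmatched in `M` and `p` prefers `b` to `a`, then no stable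
extension `M' ⊇ M` (a matching containing `M`, possibly violating quotas, admitting no
envy pair) matches `a` to `p`. -/
theorem stmt8 {A P : Type*} [Fintype A] [DecidableEq P]
    (list : A → Finset P) (rankA : A → P → ℕ) (rankP : P → A → ℕ) (q : P → ℕ)
    (M : A → Option P)
    (hM : HRStable list rankA rankP q M)
    (a : A) (p : P) (hap : p ∈ list a)
    (b : A) (pb : P)
    -- b = Barrier(p): matched, prefers p to its partner, most preferred by p among such
    (hb : M b = some pb) (hbl : p ∈ list b) (hbpref : rankA b p < rankA b pb)
    (hbtop : ∀ a' r, M a' = some r → p ∈ list a' → rankA a' p < rankA a' r →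
      rankP p b ≤ rankP p a')
    (haun : M a = none)                       -- a is unmatched in M
    (hbar : rankP p b < rankP p a) :          -- p prefers Barrier(p) to a
    ∀ M' : A → Option P,
      (∀ x r, M x = some r → M' x = some r) →                 -- M ⊆ M'
      (∀ x r, M' x = some r → r ∈ list x) →                   -- M' along edges
      (¬ ∃ x x' r, M' x' = some r ∧ r ∈ list x ∧              -- M' envy-free
        (∀ s, M' x = some s → rankA x r < rankA x s) ∧ rankP r x < rankP r x') →
      M' a ≠ some p := by
  intro M' hsub _hedge henvy hMa
  exact henvy ⟨b, a, p, hMa, hbl,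
    fun s hs => by
      have := hsub b pb hb
      rw [this] at hs
      cases hs
      exact hbpref,
    hbar⟩
end

section
/- Every agent in A_u(M) can be matched in a stable extension of M: if M is a stable matching of an HR instance G and A_u(M) is the set of unmatched agents a that have some program p on their list with p preferring a to Barrier(p) (or Barrier(p) undefined), then the matching M' obtained from M by matching each a ∈ A_u(M) to its most-preferred such program p is a stable extension of M (i.e., M ⊆ M' and M' is envy-free). -/
/-- Every agent of `A_u(M)` can be matched in a stable extension of `M`: the matching `M'`
obtained from a stable matching `M` by assigning each unmatched agent `a` that has a
"good" program (one that prefers `a` to `Barrier(p)`, or whose barrier is undefined) to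
its most-preferred good program, is a stable extension of `M`, i.e. `M ⊆ M'` and `M'` is
envy-free. -/
theorem stmt10 {A P : Type*} [Fintype A] [DecidableEq P]
    (list : A → Finset P) (rankA : A → P → ℕ) (rankP : P → A → ℕ) (q : P → ℕ)
    (M : A → Option P)
    (hM : HRStable list rankA rankP q M)
    (good : A → P → Prop)
    (hgood : ∀ a p, good a p ↔ (p ∈ list a ∧
      ∀ a' r, M a' = some r → p ∈ list a' → rankA a' p < rankA a' r →
        rankP p a < rankP p a'))
    (M' : A → Option P)
    (hext : ∀ a p, M a = some p → M' a = some p)              -- M ⊆ M'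
    (hassign : ∀ a, M a = none →
      ((∃ p, good a p) → ∃ p, M' a = some p ∧ good a p ∧
        ∀ r, good a r → rankA a p ≤ rankA a r) ∧
      ((¬ ∃ p, good a p) → M' a = none)) :
    -- M' is envy-free, hence a stable extension of M
    ¬ ∃ x x' r, M' x' = some r ∧ r ∈ list x ∧
      (∀ s, M' x = some s → rankA x r < rankA x s) ∧ rankP r x < rankP r x' := by
  rintro ⟨x, x', r, hM'x', hrlist, hpref, hrank⟩
  obtain ⟨hlist, hcap, hnoblock⟩ := hM
  cases hMx' : M x' with
  | some r0 =>
    -- x' matched in M; then M x' = some r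
    have hr0 : r0 = r := by
      have h := hext x' r0 hMx'
      rw [hM'x'] at h
      exact (Option.some_inj.mp h).symm
    rw [hr0] at hMx'
    by_cases hg : good x r
    · -- r is good for x; derive contradiction via minimality / assignment
      cases hMx : M x with
      | some s =>
        -- blocking pair (x, r) in M
        apply hnoblock
        refine ⟨x, r, hrlist, ?_, ?_, Or.inr ⟨x', hMx', hrank⟩⟩
        · intro h
          rw [hMx] at h
          have hs : s = r := Option.some_inj.mp h
          rw [hs] at hMx
          exact absurd (hpref r (hext x r hMx)) (lt_irrefl _)
        · intro r' hr'
          rw [hMx] at hr'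
          rw [← Option.some_inj.mp hr']
          exact hpref s (hext x s hMx)
      | none =>
        obtain ⟨p, hM'xp, _, hmin⟩ := (hassign x hMx).1 ⟨r, hg⟩
        exact absurd (hpref p hM'xp) (not_lt.mpr (hmin r hg))
    · -- r not good for x: extract witness and form blocking pair (a', r)
      rw [hgood] at hg
      push_neg at hg
      obtain ⟨a', r', hMa', hrla', hlt, hge⟩ := hg hrlist
      apply hnoblock
      refine ⟨a', r, hrla', ?_, ?_, Or.inr ⟨x', hMx', lt_of_le_of_lt hge hrank⟩⟩
      · intro h
        rw [hMa'] at h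
        rw [← Option.some_inj.mp h] at hlt
        exact absurd hlt (lt_irrefl _)
      · intro s hs
        rw [hMa'] at hs
        rw [Option.some_inj.mp hs] at hlt
        exact hlt
  | none =>
    -- x' assigned by hassign; so good x' r
    have hgx' : good x' r := by
      by_cases hex : ∃ p, good x' p
      · obtain ⟨p, hM'xp, hgp, _⟩ := (hassign x' hMx').1 hex
        rw [hM'x'] at hM'xp
        rw [← Option.some_inj.mp hM'xp] at hgp
        exact hgp
      · have h := (hassign x' hMx').2 hex
        rw [hM'x'] at h
        exact absurd h (by simp)
    have hgx'2 := ((hgood x' r).mp hgx').2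
    cases hMx : M x with
    | some s =>
      have := hgx'2 x s hMx hrlist (hpref s (hext x s hMx))
      exact absurd hrank (not_lt.mpr (le_of_lt this))
    | none =>
      have hgxr : good x r := by
        rw [hgood]
        exact ⟨hrlist, fun a' r' hMa' hl hlt => lt_trans hrank (hgx'2 a' r' hMa' hl hlt)⟩
      obtain ⟨p, hM'xp, _, hmin⟩ := (hassign x hMx).1 ⟨r, hgxr⟩
      exact absurd (hpref p hM'xp) (not_lt.mpr (hmin r hgxr))
end

section
/- Resolving blocking pairs by promotion preserves A-perfectness and yields stability: the matching output by the following procedure is A-perfect and stable (envy-free). Initialize M by matching each agent a to p*_a (its cheapest listed program, ties by preference). Then for each program p (in arbitrary order), scanning agents in reverse order of p's preference list, whenever an agent a not in M(p) prefers p to M(a) and some a' ∈ M(p) is less preferred by p than a, reassign a to p. The final M is A-perfect and admits no blocking pair. -/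
/-!
Agents only ever move to programs they strictly prefer, and a program gains agents only while
it is being scanned, so a pair `(a, p)` that is not blocking after the scan of `p` never becomes
blocking again. During the scan of `p` the agents come worst first: once `a` has been handled it
does not block with `p`, and every agent promoted to `p` afterwards is one `p` prefers to `a`,
so `a` still does not block with `p` when the scan ends. Every promotion is to a listed program,
so the matching stays A-perfect.
-/

open Classical in
/-- One step of the promotion procedure: if agent `a` (not currently in `M(p)`) prefers
`p` to its current assignment and some agent currently matched to `p` is less preferred
by `p` than `a`, reassign `a` to `p`; otherwise leave `M` unchanged. -/
noncomputable def promote {A P : Type*} [DecidableEq A] [DecidableEq P]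
    (list : A → Finset P) (rankA : A → P → ℕ) (rankP : P → A → ℕ)
    (p : P) (M : A → P) (a : A) : A → P :=
  if p ∈ list a ∧ M a ≠ p ∧ rankA a p < rankA a (M a) ∧
      (∃ a', M a' = p ∧ rankP p a < rankP p a')
  then Function.update M a p else M

/-- Scan the agents (given in `rev`, the reverse of `p`'s preference list) for program `p`. -/
noncomputable def scanProgram {A P : Type*} [DecidableEq A] [DecidableEq P]
    (list : A → Finset P) (rankA : A → P → ℕ) (rankP : P → A → ℕ)
    (p : P) (rev : List A) (M : A → P) : A → P :=
  rev.foldl (promote list rankA rankP p) M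

/-- The full procedure: starting from `M₀`, process every program `p` in the order `ps`,
scanning agents in reverse order of `p`'s preference list. -/
noncomputable def runAlgo {A P : Type*} [DecidableEq A] [DecidableEq P]
    (list : A → Finset P) (rankA : A → P → ℕ) (rankP : P → A → ℕ)
    (ps : List P) (rev : P → List A) (M₀ : A → P) : A → P :=
  ps.foldl (fun M p => scanProgram list rankA rankP p (rev p) M) M₀

namespace Promotion

variable {A P : Type*} [DecidableEq A] [DecidableEq P]
  (list : A → Finset P) (rankA : A → P → ℕ) (rankP : P → A → ℕ)

def IsBlockingPair (M : A → P) (a : A) (p : P) : Prop :=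
  p ∈ list a ∧ rankA a p < rankA a (M a) ∧ ∃ a', M a' = p ∧ rankP p a < rankP p a'

theorem promote_of_isBlockingPair {p : P} {M : A → P} {a : A}
    (h : IsBlockingPair list rankA rankP M a p) :
    promote list rankA rankP p M a = Function.update M a p := by
  obtain ⟨hmem, hlt, hworse⟩ := h
  exact if_pos ⟨hmem, fun he => (he ▸ hlt).false, hlt, hworse⟩

theorem promote_of_not_isBlockingPair {p : P} {M : A → P} {a : A}
    (h : ¬ IsBlockingPair list rankA rankP M a p) :
    promote list rankA rankP p M a = M :=
  if_neg fun ⟨hmem, _, hlt, hworse⟩ => h ⟨hmem, hlt, hworse⟩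

theorem promote_apply_eq_or (p : P) (M : A → P) (a b : A) :
    promote list rankA rankP p M a b = M b ∨
      b = a ∧ IsBlockingPair list rankA rankP M b p ∧ promote list rankA rankP p M a b = p := by
  by_cases hblock : IsBlockingPair list rankA rankP M a p
  · rw [promote_of_isBlockingPair list rankA rankP hblock]
    by_cases hb : b = a
    · subst hb
      exact Or.inr ⟨rfl, hblock, Function.update_self ..⟩
    · exact Or.inl (Function.update_of_ne hb ..)
  · exact Or.inl (by rw [promote_of_not_isBlockingPair list rankA rankP hblock])

theorem rankA_promote_le (p : P) (M : A → P) (a b : A) :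
    rankA b (promote list rankA rankP p M a b) ≤ rankA b (M b) := by
  rcases promote_apply_eq_or list rankA rankP p M a b with h | ⟨_, ⟨_, hlt, _⟩, h⟩
  · rw [h]
  · rw [h]; exact hlt.le

theorem rankA_scanProgram_le (p : P) (l : List A) (M : A → P) (b : A) :
    rankA b (scanProgram list rankA rankP p l M b) ≤ rankA b (M b) :=
  List.foldlRecOn (motive := fun M' : A → P => rankA b (M' b) ≤ rankA b (M b)) l _ le_rfl
    fun _ hM' a _ => (rankA_promote_le list rankA rankP p _ a b).trans hM'

theorem scanProgram_apply_eq_or (p : P) (l : List A) (M : A → P) (b : A) :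
    scanProgram list rankA rankP p l M b = M b ∨
      scanProgram list rankA rankP p l M b = p ∧ p ∈ list b :=
  List.foldlRecOn (motive := fun M' : A → P => M' b = M b ∨ M' b = p ∧ p ∈ list b) l _
    (Or.inl rfl)
    fun M' hM' a _ => by
      rcases promote_apply_eq_or list rankA rankP p M' a b with h | ⟨_, ⟨hmem, _⟩, h⟩
      · exact h ▸ hM'
      · exact Or.inr ⟨h, hmem⟩

theorem runAlgo_mem (ps : List P) (rev : P → List A) {M : A → P} (hM : ∀ b, M b ∈ list b)
    (b : A) : runAlgo list rankA rankP ps rev M b ∈ list b :=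
  List.foldlRecOn (motive := fun M' : A → P => ∀ b, M' b ∈ list b) ps _ hM
    (fun M' hM' q _ b => by
      rcases scanProgram_apply_eq_or list rankA rankP q (rev q) M' b with h | ⟨h, hmem⟩
      · rw [h]; exact hM' b
      · rw [h]; exact hmem) b

theorem not_isBlockingPair_promote_self (p : P) (M : A → P) (a : A) :
    ¬ IsBlockingPair list rankA rankP (promote list rankA rankP p M a) a p := by
  intro hblock
  by_cases h : IsBlockingPair list rankA rankP M a p
  · rw [promote_of_isBlockingPair list rankA rankP h] at hblock
    obtain ⟨_, hlt, _⟩ := hblock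
    rw [Function.update_self] at hlt
    exact hlt.false
  · rw [promote_of_not_isBlockingPair list rankA rankP h] at hblock
    exact h hblock

/-- Only agents `p` prefers to `a` can join `p`, and `a`'s own assignment only improves. -/
theorem not_isBlockingPair_promote_of_lt {p : P} {M : A → P} {a b : A}
    (hba : rankP p b < rankP p a) (h : ¬ IsBlockingPair list rankA rankP M a p) :
    ¬ IsBlockingPair list rankA rankP (promote list rankA rankP p M b) a p := by
  rintro ⟨hmem, hlt, a', ha', hworse⟩
  rcases promote_apply_eq_or list rankA rankP p M b a' with h' | ⟨rfl, _⟩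
  · exact h ⟨hmem, hlt.trans_le (rankA_promote_le list rankA rankP p M b a), a', h' ▸ ha',
      hworse⟩
  · exact (hworse.trans hba).false

theorem not_isBlockingPair_scanProgram (p : P) {l : List A}
    (hl : l.Pairwise fun x y => rankP p y < rankP p x) (M : A → P) {a : A} (ha : a ∈ l) :
    ¬ IsBlockingPair list rankA rankP (scanProgram list rankA rankP p l M) a p := by
  induction l generalizing M with
  | nil => exact absurd ha List.not_mem_nil
  | cons x t ih =>
    obtain ⟨hx, ht⟩ := List.pairwise_cons.mp hl
    rcases List.mem_cons.mp ha with rfl | ha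
    · exact List.foldlRecOn
        (motive := fun M' : A → P => ¬ IsBlockingPair list rankA rankP M' a p) t _
        (not_isBlockingPair_promote_self list rankA rankP p M a)
        fun _ hM' y hy => not_isBlockingPair_promote_of_lt list rankA rankP (hx y hy) hM'
    · exact ih ht _ ha

theorem not_isBlockingPair_scanProgram_of_ne {p q : P} (hqp : q ≠ p) (l : List A)
    {M : A → P} {a : A} (h : ¬ IsBlockingPair list rankA rankP M a p) :
    ¬ IsBlockingPair list rankA rankP (scanProgram list rankA rankP q l M) a p := by
  rintro ⟨hmem, hlt, a', ha', hworse⟩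
  rcases scanProgram_apply_eq_or list rankA rankP q l M a' with h' | ⟨h', _⟩
  · exact h ⟨hmem, hlt.trans_le (rankA_scanProgram_le list rankA rankP q l M a), a',
      h' ▸ ha', hworse⟩
  · exact hqp (h'.symm.trans ha')

theorem not_isBlockingPair_runAlgo_of_not_mem {p : P} {ps : List P} (hp : p ∉ ps)
    (rev : P → List A) {M : A → P} {a : A} (h : ¬ IsBlockingPair list rankA rankP M a p) :
    ¬ IsBlockingPair list rankA rankP (runAlgo list rankA rankP ps rev M) a p :=
  List.foldlRecOn (motive := fun M' : A → P => ¬ IsBlockingPair list rankA rankP M' a p) ps _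
    h
    fun _ hM' q hq => not_isBlockingPair_scanProgram_of_ne list rankA rankP
      (fun hqp : q = p => hp (hqp ▸ hq)) _ hM'

theorem not_isBlockingPair_runAlgo {p : P} {ps : List P} (hp : p ∈ ps) (rev : P → List A)
    (hall : ∀ a, a ∈ rev p) (hsorted : (rev p).Pairwise fun x y => rankP p y < rankP p x)
    (M : A → P) (a : A) :
    ¬ IsBlockingPair list rankA rankP (runAlgo list rankA rankP ps rev M) a p := by
  induction ps generalizing M with
  | nil => exact absurd hp List.not_mem_nil
  | cons q t ih =>
    by_cases hpt : p ∈ t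
    · exact ih hpt _
    · obtain rfl : p = q := (List.mem_cons.mp hp).resolve_right hpt
      exact not_isBlockingPair_runAlgo_of_not_mem list rankA rankP hpt rev
        (not_isBlockingPair_scanProgram list rankA rankP p hsorted M (hall a))

end Promotion

open Promotion in
theorem stmt12_general {A P : Type*} [DecidableEq A] [DecidableEq P]
    (list : A → Finset P)
    (rankA : A → P → ℕ) (rankP : P → A → ℕ)
    (pstar : A → P)
    (hmem : ∀ a, pstar a ∈ list a)
    (ps : List P) (hps : ∀ p : P, p ∈ ps)               -- all programs, arbitrary order
    (rev : P → List A)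
    (hrevall : ∀ p a, a ∈ rev p)                        -- all agents scanned
    (hrevsorted : ∀ p, (rev p).Pairwise (fun x y => rankP p y < rankP p x)) :
    -- reverse preference order: worse agents first
    (∀ a, (runAlgo list rankA rankP ps rev (fun a => pstar a)) a ∈ list a) ∧
    (¬ ∃ a p, p ∈ list a ∧
      rankA a p < rankA a ((runAlgo list rankA rankP ps rev (fun a => pstar a)) a) ∧
      ∃ a', (runAlgo list rankA rankP ps rev (fun a => pstar a)) a' = p ∧
        rankP p a < rankP p a') :=
  ⟨runAlgo_mem list rankA rankP ps rev hmem,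
    fun ⟨a, p, hblock⟩ => not_isBlockingPair_runAlgo list rankA rankP (hps p) rev
      (hrevall p) (hrevsorted p) _ a hblock⟩

/-- Resolving blocking pairs by promotion yields an A-perfect stable matching: start from
the matching assigning every agent `a` to `p*_a` (its cheapest listed program, ties broken
by `a`'s preference); for each program (in arbitrary order), scanning agents in reverse
order of the program's preference list, promote any agent forming a blocking pair with it.
The final matching is A-perfect and admits no blocking pair. -/
theorem stmt12 {A P : Type*} [DecidableEq A] [DecidableEq P]
    (list : A → Finset P) (c : P → ℕ)
    (rankA : A → P → ℕ) (rankP : P → A → ℕ)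
    (pstar : A → P)
    (hmem : ∀ a, pstar a ∈ list a)
    (hmin : ∀ a p, p ∈ list a → c (pstar a) ≤ c p)
    (htie : ∀ a p, p ∈ list a → c p = c (pstar a) → rankA a (pstar a) ≤ rankA a p)
    (ps : List P) (hps : ∀ p : P, p ∈ ps)               -- all programs, arbitrary order
    (rev : P → List A)
    (hrevall : ∀ p a, a ∈ rev p)                        -- all agents scanned
    (hrevsorted : ∀ p, (rev p).Pairwise (fun x y => rankP p y < rankP p x)) :
    -- reverse preference order: worse agents first
    (∀ a, (runAlgo list rankA rankP ps rev (fun a => pstar a)) a ∈ list a) ∧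
    (¬ ∃ a p, p ∈ list a ∧
      rankA a p < rankA a ((runAlgo list rankA rankP ps rev (fun a => pstar a)) a) ∧
      ∃ a', (runAlgo list rankA rankP ps rev (fun a => pstar a)) a' = p ∧
        rankP p a < rankP p a') :=
  stmt12_general list rankA rankP pstar hmem ps hps rev hrevall hrevsorted
end

section
/- NP-hardness reduction, forward direction: given a set cover instance (S, E, k) where every element occurs in exactly f ≥ 2 sets, if there is a set cover X ⊆ S with |X| ≤ k, then the constructed flexible-quotas instance H admits an A-perfect stable matching of total cost at most |E| + k, where H has: a set-agent a_i and set-program p_i (cost 1) per set s_i; an element-agent a'_j per element e_j; one program p of cost 0 and programs p^1,...,p^{f-2} of cost 1; a_i lists p_i, p, p^1,...,p^{f-2}; a'_j lists the f set-programs of sets containing e_j; p_i ranks a_i first then its element-agents; p and each p^t rank all set-agents. -/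
namespace SCRed

/- The reduced flexible-quotas instance H from a set cover instance (S, E, k) with
|S| = m, |E| = n, where every element occurs in exactly f sets (`covers e` is the set of
indices of sets containing element e).  Agents: set-agents `Sum.inl i` and element-agents
`Sum.inr e`.  Programs: set-programs `Sum.inl i` (cost 1), the program p = `Sum.inr 0`
(cost 0) and programs p^1,...,p^{f-2} = `Sum.inr t`, t ≥ 1 (cost 1). -/

/-- Preference lists: set-agent a_i lists p_i, p, p^1, ..., p^{f-2}; element-agent a'_e
lists the f set-programs of the sets containing e. -/
def list (m n f : ℕ) (covers : Fin n → Finset (Fin m)) :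
    Fin m ⊕ Fin n → Finset (Fin m ⊕ Fin (f - 1))
  | Sum.inl i => {Sum.inl i} ∪ Finset.univ.image Sum.inr
  | Sum.inr e => (covers e).image Sum.inl

/-- Agents' ranks: a_i : p_i, p, p^1, ..., p^{f-2}; a'_e : its set-programs in a fixed
arbitrary order. -/
def rankA (m n f : ℕ) : Fin m ⊕ Fin n → Fin m ⊕ Fin (f - 1) → ℕ
  | Sum.inl i => fun p => match p with
      | Sum.inl j => if j = i then 0 else f + 2 + j.val
      | Sum.inr t => t.val + 1
  | Sum.inr _ => fun p => match p with
      | Sum.inl j => j.val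
      | Sum.inr _ => m + f

/-- Programs' ranks: p_i ranks a_i first, then its element-agents; p and each p^t rank
all set-agents (in a fixed arbitrary order). -/
def rankP (m n f : ℕ) : Fin m ⊕ Fin (f - 1) → Fin m ⊕ Fin n → ℕ
  | Sum.inl i => fun a => match a with
      | Sum.inl j => if j = i then 0 else n + 1 + j.val
      | Sum.inr e => e.val + 1
  | Sum.inr _ => fun a => match a with
      | Sum.inl j => j.val
      | Sum.inr e => m + e.val

/-- Costs: every set-program p_i and every p^t costs 1; the program p costs 0. -/
def cost (m f : ℕ) : Fin m ⊕ Fin (f - 1) → ℕ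
  | Sum.inl _ => 1
  | Sum.inr t => if t.val = 0 then 0 else 1

/-- Flexible-quotas stability (envy-freeness) for a total matching. -/
def FlexStable {A P : Type*} (list : A → Finset P)
    (rankA : A → P → ℕ) (rankP : P → A → ℕ) (M : A → P) : Prop :=
  ¬ ∃ a p, p ∈ list a ∧ rankA a p < rankA a (M a) ∧
    ∃ a', M a' = p ∧ rankP p a < rankP p a'

/-- NP-hardness reduction, forward direction: if the set cover instance has a cover `X`
of size at most `k`, then the reduced instance H admits an A-perfect stable matching of
total cost at most `n + k`. -/
theorem stmt14 (m n f k : ℕ) (hf : 2 ≤ f)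
    (covers : Fin n → Finset (Fin m))
    (hocc : ∀ e, (covers e).card = f)          -- every element occurs in exactly f sets
    (X : Finset (Fin m)) (hXcard : X.card ≤ k)
    (hXcover : ∀ e, ∃ i ∈ X, i ∈ covers e) :   -- X is a set cover
    ∃ M : Fin m ⊕ Fin n → Fin m ⊕ Fin (f - 1),
      (∀ a, M a ∈ list m n f covers a) ∧
      FlexStable (list m n f covers) (rankA m n f) (rankP m n f) M ∧
      ∑ a, cost m f (M a) ≤ n + k := by
  have hf1 : 0 < f - 1 := by omega
  have hne : ∀ e, ((covers e) ∩ X).Nonempty := fun e => by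
    obtain ⟨i, hiX, hic⟩ := hXcover e
    exact ⟨i, Finset.mem_inter.mpr ⟨hic, hiX⟩⟩
  refine ⟨fun a => match a with
    | Sum.inl i => if i ∈ X then Sum.inl i else Sum.inr ⟨0, hf1⟩
    | Sum.inr e => Sum.inl (((covers e) ∩ X).min' (hne e)), ?_, ?_, ?_⟩
  · rintro (i | e)
    · by_cases hi : i ∈ X <;> simp [list, hi]
    · simp only [list, Finset.mem_image]
      exact ⟨_, (Finset.mem_inter.mp (Finset.min'_mem _ (hne e))).1, rfl⟩
  · rintro ⟨a, p, hp, hlt, a', hMa', hrk⟩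
    rcases a with i | e
    · by_cases hi : i ∈ X
      · simp [rankA, hi] at hlt
      · simp only [hi, if_false, rankA] at hlt
        rcases p with j | t
        · simp only [] at hlt
          have hj : j = i := by by_contra h; simp [h] at hlt
          subst hj
          rcases a' with i' | e'
          · by_cases hi' : i' ∈ X
            · simp only [hi', if_true, Sum.inl.injEq] at hMa'
              exact hi (hMa' ▸ hi')
            · simp [hi'] at hMa'
          · simp only [Sum.inl.injEq] at hMa'
            have := (Finset.mem_inter.mp (Finset.min'_mem _ (hne e'))).2
            rw [hMa'] at this
            exact hi this
        · simp at hlt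
    · -- a = element agent e; M a = inl j₀ with j₀ = min of covers e ∩ X
      set j₀ := ((covers e) ∩ X).min' (hne e) with hj₀
      rcases p with j | t
      · simp only [rankA] at hlt
        rcases a' with i' | e'
        · by_cases hi' : i' ∈ X
          · simp only [hi', if_true, Sum.inl.injEq] at hMa'
            subst hMa'
            simp [rankP] at hrk
          · simp [hi'] at hMa'
        · simp only [Sum.inl.injEq] at hMa'
          have hjX : j ∈ X := by
            have := (Finset.mem_inter.mp (Finset.min'_mem _ (hne e'))).2
            rwa [hMa'] at this
          have hjc : j ∈ covers e := by
            simp only [list, Finset.mem_image] at hp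
            obtain ⟨x, hx, hxe⟩ := hp
            cases hxe; exact hx
          have hle : j₀ ≤ j := Finset.min'_le _ _ (Finset.mem_inter.mpr ⟨hjc, hjX⟩)
          have hle' : j₀.val ≤ j.val := hle
          omega
      · simp only [list, Finset.mem_image] at hp
        obtain ⟨x, _, hxe⟩ := hp
        cases hxe
  · rw [Fintype.sum_sum_type]
    have h1 : ∑ i : Fin m, cost m f (if i ∈ X then Sum.inl i else Sum.inr ⟨0, hf1⟩)
        = X.card := by
      have heq : ∀ i : Fin m, cost m f (if i ∈ X then Sum.inl i else Sum.inr ⟨0, hf1⟩)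
          = if i ∈ X then 1 else 0 := by
        intro i; by_cases hi : i ∈ X <;> simp [cost, hi]
      simp only [heq]
      simp [Finset.sum_ite_mem]
    have h2 : ∑ e : Fin n, cost m f
        (Sum.inl (((covers e) ∩ X).min' (hne e)) : Fin m ⊕ Fin (f-1)) = n := by
      simp [cost]
    calc ∑ i : Fin m, cost m f (if i ∈ X then Sum.inl i else Sum.inr ⟨0, hf1⟩)
          + ∑ e : Fin n, cost m f (Sum.inl (((covers e) ∩ X).min' (hne e)))
        = X.card + n := by rw [h1, h2]
      _ ≤ n + k := by omega

end SCRed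
end

section
/- NP-hardness reduction, backward direction: with H as constructed from a set cover instance (S,E,k) with |S| = m, |E| = n, every element in exactly f sets, if H admits an A-perfect stable matching M of total cost at most n + k, then {s_i : M(a_i) = p_i} is a set cover of size at most k. -/
namespace SCRed

/-- NP-hardness reduction, backward direction: if the reduced instance H admits an
A-perfect stable matching `M` of total cost at most `n + k`, then
`X = {s_i : M(a_i) = p_i}` is a set cover of size at most `k`. -/
theorem stmt15 (m n f k : ℕ) (hf : 2 ≤ f)
    (covers : Fin n → Finset (Fin m))
    (hocc : ∀ e, (covers e).card = f)          -- every element occurs in exactly f sets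
    (M : Fin m ⊕ Fin n → Fin m ⊕ Fin (f - 1))
    (hedge : ∀ a, M a ∈ list m n f covers a)
    (hstable : FlexStable (list m n f covers) (rankA m n f) (rankP m n f) M)
    (hcost : ∑ a, cost m f (M a) ≤ n + k) :
    (Finset.univ.filter (fun i : Fin m => M (Sum.inl i) = Sum.inl i)).card ≤ k ∧
    ∀ e, ∃ i ∈ Finset.univ.filter (fun i : Fin m => M (Sum.inl i) = Sum.inl i),
      i ∈ covers e := by

  have helem : ∀ e : Fin n, ∃ j ∈ covers e, M (Sum.inr e) = Sum.inl j := by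
    intro e
    have h := hedge (Sum.inr e)
    simp only [list, Finset.mem_image] at h
    obtain ⟨j, hj, hje⟩ := h
    exact ⟨j, hj, hje.symm⟩
  have hclosed : ∀ e j, M (Sum.inr e) = Sum.inl j → M (Sum.inl j) = Sum.inl j := by
    intro e j hMe
    by_contra hne
    apply hstable
    refine ⟨Sum.inl j, Sum.inl j, ?_, ?_, Sum.inr e, hMe, ?_⟩
    · simp [list]
    · have hpos : 0 < rankA m n f (Sum.inl j) (M (Sum.inl j)) := by
        have h := hedge (Sum.inl j)
        simp only [list, Finset.mem_union, Finset.mem_singleton, Finset.mem_image] at h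
        rcases h with h | ⟨t, _, ht⟩
        · exact absurd h hne
        · rw [← ht]; simp [rankA]
      simpa [rankA] using hpos
    · simp [rankP]
  constructor
  · have hn : ∀ e : Fin n, cost m f (M (Sum.inr e)) = 1 := by
      intro e
      obtain ⟨j, _, hj⟩ := helem e
      rw [hj]; rfl
    have hXle : (Finset.univ.filter (fun i : Fin m => M (Sum.inl i) = Sum.inl i)).card
        ≤ ∑ i : Fin m, cost m f (M (Sum.inl i)) := by
      rw [Finset.card_filter]
      apply Finset.sum_le_sum
      intro i _
      by_cases h : M (Sum.inl i) = Sum.inl i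
      · rw [if_pos h, h]; simp [cost]
      · rw [if_neg h]; exact Nat.zero_le _
    have htot : ∑ a, cost m f (M a)
        = ∑ i : Fin m, cost m f (M (Sum.inl i)) + ∑ e : Fin n, cost m f (M (Sum.inr e)) :=
      Fintype.sum_sum_type _
    rw [htot, Finset.sum_congr rfl (fun e _ => hn e), Finset.sum_const,
      Finset.card_univ, Fintype.card_fin, smul_eq_mul, mul_one] at hcost
    omega
  · intro e
    obtain ⟨j, hj, hMe⟩ := helem e
    exact ⟨j, Finset.mem_filter.2 ⟨Finset.mem_univ _, hclosed e j hMe⟩, hj⟩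


end SCRed
end

section
/- Inapproximability gadget, forward direction: given a graph G = (V,E) with |V| = n, |E| = m and a vertex cover V' with |V'| ≤ (2/3 + ε)n, the constructed flexible-quotas instance H admits an A-perfect stable matching of total cost at most (4 + 3ε)mn, where H has m vertex-agents a_i^1,...,a_i^m and programs p_i (cost 3), p_i' (cost 2n) per vertex u_i, one edge-agent a'_j per edge, and a program p of cost 0; a_i^t lists p_i, p_i', p; a'_j lists the programs p_i' of the two endpoints of e_j; p_i' ranks a_i^1,...,a_i^m above the edge-agents of edges incident to u_i. -/
namespace VCRed

/- The reduced flexible-quotas instance H from a graph G with vertices `Fin n` and edges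
`e_j = (u j, v j)`, `j : Fin m`.  Agents: vertex-agents a_i^t = `Sum.inl (i, t)` and
edge-agents a'_j = `Sum.inr j`.  Programs: p_i = `Sum.inl (i, false)` (cost 3),
p_i' = `Sum.inl (i, true)` (cost 2n), and p = `Sum.inr ()` (cost 0). -/

/-- Preference lists: a_i^t lists p_i, p_i', p; a'_j lists p'_{u j} and p'_{v j}. -/
def list (n m : ℕ) (u v : Fin m → Fin n) :
    (Fin n × Fin m) ⊕ Fin m → Finset ((Fin n × Bool) ⊕ Unit)
  | Sum.inl (i, _) => {Sum.inl (i, false), Sum.inl (i, true), Sum.inr ()}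
  | Sum.inr j => {Sum.inl (u j, true), Sum.inl (v j, true)}

/-- Agents' ranks: a_i^t : p_i, p_i', p; a'_j : its two programs in a fixed order. -/
def rankA (n m : ℕ) : (Fin n × Fin m) ⊕ Fin m → (Fin n × Bool) ⊕ Unit → ℕ
  | Sum.inl (i, _) => fun p => match p with
      | Sum.inl (i', b) => if i' = i then (if b then 1 else 0) else 5
      | Sum.inr _ => 2
  | Sum.inr _ => fun p => match p with
      | Sum.inl (i, _) => i.val
      | Sum.inr _ => n + 1

/-- Programs' ranks: p_i ranks a_i^1, ..., a_i^m; p_i' ranks a_i^1, ..., a_i^m above all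
edge-agents; p ranks all vertex-agents in a fixed order. -/
def rankP (n m : ℕ) : (Fin n × Bool) ⊕ Unit → (Fin n × Fin m) ⊕ Fin m → ℕ
  | Sum.inl (i, b) => fun a => match a with
      | Sum.inl (i', t) => if i' = i then t.val else 2 * m + n + t.val
      | Sum.inr j => if b then m + j.val else 2 * m + j.val
  | Sum.inr _ => fun a => match a with
      | Sum.inl (i, t) => i.val * m + t.val
      | Sum.inr j => n * m + j.val

/-- Costs: c(p_i) = 3, c(p_i') = 2n, c(p) = 0. -/
def cost (n : ℕ) : (Fin n × Bool) ⊕ Unit → ℕ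
  | Sum.inl (_, b) => if b then 2 * n else 3
  | Sum.inr _ => 0

/-- Flexible-quotas stability (envy-freeness) for a total matching. -/
def FlexStable {A P : Type*} (list : A → Finset P)
    (rankA : A → P → ℕ) (rankP : P → A → ℕ) (M : A → P) : Prop :=
  ¬ ∃ a p, p ∈ list a ∧ rankA a p < rankA a (M a) ∧
    ∃ a', M a' = p ∧ rankP p a < rankP p a'

/-- Inapproximability gadget, forward direction: if G has a vertex cover `V'` with
`|V'| ≤ (2/3 + ε)·n`, then H admits an A-perfect stable matching of total cost at most
`(4 + 3ε)·m·n`. -/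
theorem stmt16 (n m : ℕ) (u v : Fin m → Fin n) (ε : ℝ) (hε : 0 ≤ ε)
    (V' : Finset (Fin n))
    (hVC : ∀ j, u j ∈ V' ∨ v j ∈ V')                  -- V' is a vertex cover
    (hsize : (V'.card : ℝ) ≤ (2 / 3 + ε) * n) :
    ∃ M : (Fin n × Fin m) ⊕ Fin m → (Fin n × Bool) ⊕ Unit,
      (∀ a, M a ∈ list n m u v a) ∧
      FlexStable (list n m u v) (rankA n m) (rankP n m) M ∧
      ((∑ a, cost n (M a) : ℕ) : ℝ) ≤ (4 + 3 * ε) * m * n := by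
  classical
  -- chosen covered endpoint of edge j (the preferred one among covered endpoints)
  set w : Fin m → Fin n := fun j =>
    if u j ∈ V' ∧ ((u j).val ≤ (v j).val ∨ v j ∉ V') then u j else v j with hw
  have hwV : ∀ j, w j ∈ V' := by
    intro j
    simp only [hw]
    split_ifs with h
    · exact h.1
    · rcases hVC j with h1 | h2
      · by_contra hv
        exact h ⟨h1, Or.inr hv⟩
      · exact h2
  -- if the other endpoint is strictly preferred, it is uncovered
  have hwmin : ∀ j (i : Fin n), (Sum.inl (i, true) : (Fin n × Bool) ⊕ Unit) ∈
      list n m u v (Sum.inr j) → i.val < (w j).val → i ∉ V' := by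
    intro j i hi hlt hiV
    simp only [list, Finset.mem_insert, Finset.mem_singleton, Sum.inl.injEq,
      Prod.mk.injEq] at hi
    by_cases h : u j ∈ V' ∧ ((u j).val ≤ (v j).val ∨ v j ∉ V')
    · rw [hw] at hlt
      simp only [if_pos h] at hlt
      rcases hi with ⟨hi, _⟩ | ⟨hi, _⟩
      · subst hi; omega
      · subst hi
        rcases h.2 with hle | hnv
        · omega
        · exact hnv hiV
    · rw [hw] at hlt
      simp only [if_neg h] at hlt
      rcases hi with ⟨hi, _⟩ | ⟨hi, _⟩
      · subst hi
        exact h ⟨hiV, Or.inl (le_of_lt hlt)⟩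
      · subst hi; omega
  refine ⟨fun a => match a with
    | Sum.inl (i, _) => if i ∈ V' then Sum.inl (i, false) else Sum.inr ()
    | Sum.inr j => Sum.inl (w j, true), ?_, ?_, ?_⟩
  · rintro (⟨i, t⟩ | j)
    · simp only [list]
      split_ifs <;> simp
    · simp only [list, hw]
      split_ifs <;> simp
  · rintro ⟨(⟨i, t⟩ | j), p, hp, hlt, a', hM, hrank⟩
    · -- vertex agent
      by_cases hi : i ∈ V'
      · simp only [hi, if_true, rankA, if_pos rfl] at hlt
        simp only [list, Finset.mem_insert, Finset.mem_singleton] at hp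
        rcases hp with rfl | rfl | rfl <;> simp [rankA] at hlt
      · simp only [hi, if_false, rankA] at hlt
        simp only [list, Finset.mem_insert, Finset.mem_singleton] at hp
        rcases hp with rfl | rfl | rfl
        · -- p = p_i : nobody matched there
          rcases a' with ⟨i', t'⟩ | j'
          · simp only at hM
            split_ifs at hM <;> simp_all
          · simp only [Sum.inl.injEq, Prod.mk.injEq] at hM
            exact Bool.false_ne_true hM.2.symm
        · -- p = p_i' : nobody matched there
          rcases a' with ⟨i', t'⟩ | j'
          · simp only at hM
            split_ifs at hM <;> simp at hM
          · simp only [Sum.inl.injEq, Prod.mk.injEq] at hM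
            exact hi (hM.1 ▸ hwV j')
        · simp [rankA] at hlt
    · -- edge agent
      simp only [rankA] at hlt
      rcases p with ⟨i0, b0⟩ | _
      · -- preferred program is p'_{i0} with i0.val < (w j).val
        have hb0 : b0 = true := by
          simp only [list, Finset.mem_insert, Finset.mem_singleton, Sum.inl.injEq,
            Prod.mk.injEq] at hp
          rcases hp with ⟨_, h⟩ | ⟨_, h⟩ <;> exact h
        subst hb0
        have hi0 : i0 ∉ V' := hwmin j i0 hp hlt
        rcases a' with ⟨i', t'⟩ | j'
        · simp only at hM
          split_ifs at hM <;> simp_all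
        · simp only [Sum.inl.injEq, Prod.mk.injEq] at hM
          exact hi0 (hM.1 ▸ hwV j')
      · simp only [list, Finset.mem_insert, Finset.mem_singleton] at hp
        rcases hp with h | h <;> simp at h
  · -- cost bound
    have hsum : (∑ a, cost n ((fun a : (Fin n × Fin m) ⊕ Fin m => match a with
        | Sum.inl (i, _) => if i ∈ V' then Sum.inl (i, false) else (Sum.inr () : (Fin n × Bool) ⊕ Unit)
        | Sum.inr j => Sum.inl (w j, true)) a)) = 3 * m * V'.card + 2 * n * m := by
      rw [Fintype.sum_sum_type]
      have h1 : (∑ x : Fin n × Fin m, cost n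
          (if x.1 ∈ V' then Sum.inl (x.1, false) else (Sum.inr () : (Fin n × Bool) ⊕ Unit)))
          = 3 * m * V'.card := by
        rw [Fintype.sum_prod_type]
        have : ∀ i : Fin n, (∑ _t : Fin m, cost n
            (if i ∈ V' then Sum.inl (i, false) else (Sum.inr () : (Fin n × Bool) ⊕ Unit)))
            = if i ∈ V' then 3 * m else 0 := by
          intro i
          split_ifs <;> simp [cost, mul_comm]
        simp only [this]
        rw [Finset.sum_ite_mem, Finset.univ_inter, Finset.sum_const, smul_eq_mul]
        ring
      have h2 : (∑ j : Fin m, cost n (Sum.inl (w j, true) : (Fin n × Bool) ⊕ Unit))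
          = 2 * n * m := by
        simp [cost, mul_comm]
      rw [h1, h2]
    rw [hsum]
    push_cast
    have hm : (0:ℝ) ≤ m := Nat.cast_nonneg m
    have hn : (0:ℝ) ≤ n := Nat.cast_nonneg n
    nlinarith [mul_le_mul_of_nonneg_left hsize hm]

end VCRed
end

section
/- Inapproximability gadget, backward direction: with H constructed from graph G = (V,E), |V| = n, |E| = m as above, if H admits an A-perfect stable matching M of total cost at most (14/3 − 3ε)mn, then G has a vertex cover of size at most (8/9 − ε)n, namely the set of vertices u_i all m of whose agents a_i^t are matched to p_i or p_i'. -/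
namespace VCRed

/-- Inapproximability gadget, backward direction: if H admits an A-perfect stable
matching `M` of total cost at most `(14/3 - 3ε)·m·n`, then the set of vertices `u_i` all
`m` of whose agents `a_i^t` are matched to `p_i` or `p_i'` is a vertex cover of G of size
at most `(8/9 - ε)·n`. -/
theorem stmt17 (n m : ℕ) (hn : 2 ≤ n) (hm : 0 < m)
    (u v : Fin m → Fin n) (ε : ℝ) (hε : 0 ≤ ε)
    (M : (Fin n × Fin m) ⊕ Fin m → (Fin n × Bool) ⊕ Unit)
    (hedge : ∀ a, M a ∈ list n m u v a)
    (hstable : FlexStable (list n m u v) (rankA n m) (rankP n m) M)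
    (hcost : ((∑ a, cost n (M a) : ℕ) : ℝ) ≤ (14 / 3 - 3 * ε) * m * n) :
    (∀ j, u j ∈ Finset.univ.filter (fun i : Fin n =>
        ∀ t : Fin m, M (Sum.inl (i, t)) = Sum.inl (i, false) ∨
          M (Sum.inl (i, t)) = Sum.inl (i, true)) ∨
      v j ∈ Finset.univ.filter (fun i : Fin n =>
        ∀ t : Fin m, M (Sum.inl (i, t)) = Sum.inl (i, false) ∨
          M (Sum.inl (i, t)) = Sum.inl (i, true))) ∧
    (((Finset.univ.filter (fun i : Fin n =>
        ∀ t : Fin m, M (Sum.inl (i, t)) = Sum.inl (i, false) ∨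
          M (Sum.inl (i, t)) = Sum.inl (i, true))).card : ℝ) ≤ (8 / 9 - ε) * n) := by
  classical
  set S := Finset.univ.filter (fun i : Fin n =>
      ∀ t : Fin m, M (Sum.inl (i, t)) = Sum.inl (i, false) ∨
        M (Sum.inl (i, t)) = Sum.inl (i, true)) with hS
  -- key: if an edge-agent j is matched to p_i', then i ∈ S
  have key : ∀ (j : Fin m) (i : Fin n), M (Sum.inr j) = Sum.inl (i, true) → i ∈ S := by
    intro j i hji
    rw [hS, Finset.mem_filter]
    refine ⟨Finset.mem_univ _, fun t => ?_⟩
    have h1 := hedge (Sum.inl (i, t))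
    simp only [list, Finset.mem_insert, Finset.mem_singleton] at h1
    rcases h1 with h | h | h
    · exact Or.inl h
    · exact Or.inr h
    · exfalso
      apply hstable
      refine ⟨Sum.inl (i, t), Sum.inl (i, true), ?_, ?_, Sum.inr j, hji, ?_⟩
      · simp [list]
      · rw [h]; simp [rankA]
      · simp only [rankP, if_pos rfl, if_true]
        have := t.isLt
        omega
  have hcov : ∀ j : Fin m, u j ∈ S ∨ v j ∈ S := by
    intro j
    have h1 := hedge (Sum.inr j)
    simp only [list, Finset.mem_insert, Finset.mem_singleton] at h1
    rcases h1 with h | h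
    · exact Or.inl (key j _ h)
    · exact Or.inr (key j _ h)
  refine ⟨hcov, ?_⟩
  -- edge agents each cost 2n
  have hedgecost : ∀ j : Fin m, cost n (M (Sum.inr j)) = 2 * n := by
    intro j
    have h1 := hedge (Sum.inr j)
    simp only [list, Finset.mem_insert, Finset.mem_singleton] at h1
    rcases h1 with h | h <;> rw [h] <;> simp [cost]
  -- vertex agents of covered vertices each cost ≥ 3
  have hvertcost : ∀ i ∈ S, ∀ t : Fin m, 3 ≤ cost n (M (Sum.inl (i, t))) := by
    intro i hi t
    rw [hS, Finset.mem_filter] at hi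
    rcases hi.2 t with h | h <;> rw [h] <;> simp [cost] <;> omega
  -- total cost lower bound
  have hsum : 3 * m * S.card + 2 * n * m ≤ ∑ a, cost n (M a) := by
    rw [Fintype.sum_sum_type]
    have h2 : ∑ j : Fin m, cost n (M (Sum.inr j)) = 2 * n * m := by
      rw [Finset.sum_congr rfl (fun j _ => hedgecost j)]
      simp [mul_comm]
    have h1 : 3 * m * S.card ≤ ∑ p : Fin n × Fin m, cost n (M (Sum.inl p)) := by
      rw [Fintype.sum_prod_type]
      calc 3 * m * S.card = ∑ i ∈ S, 3 * m := by rw [Finset.sum_const]; ring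
        _ ≤ ∑ i ∈ S, ∑ t : Fin m, cost n (M (Sum.inl (i, t))) := by
            refine Finset.sum_le_sum fun i hi => ?_
            calc 3 * m = ∑ _t : Fin m, 3 := by simp [mul_comm]
              _ ≤ _ := Finset.sum_le_sum fun t _ => hvertcost i hi t
        _ ≤ ∑ i : Fin n, ∑ t : Fin m, cost n (M (Sum.inl (i, t))) :=
            Finset.sum_le_sum_of_subset (Finset.subset_univ S)
    omega
  -- real arithmetic
  have hR : (3 * m * S.card + 2 * n * m : ℝ) ≤ (14 / 3 - 3 * ε) * m * n := by
    calc (3 * m * S.card + 2 * n * m : ℝ)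
        ≤ ((∑ a, cost n (M a) : ℕ) : ℝ) := by exact_mod_cast hsum
      _ ≤ _ := hcost
  have hm0 : (0 : ℝ) < m := by exact_mod_cast hm
  have hkey : (S.card : ℝ) * m ≤ ((8 / 9 - ε) * n) * m := by nlinarith
  exact le_of_mul_le_mul_right hkey hm0

end VCRed
end

section
/- Optimality certificate for the exact exponential algorithm: let M be an A-perfect stable matching of a flexible-quotas instance H, and let H₀ be the subgraph containing exactly the edges (a,p) with c(p) = c(M(a)). Apply the following pruning repeatedly to H₀: if agent a's current top neighbor is p, delete every edge (a'', p') with p' preferred by a to p and a'' less preferred by p' than a. Then no edge of M is ever deleted, and in the resulting pruned graph every agent's top neighbor is weakly preferred (by that agent) to its M-partner. -/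
/-- Optimality certificate for the exact exponential algorithm: let `M` be an A-perfect
stable matching of a flexible-quotas instance and `H 0 = H₀` the subgraph of exactly the
edges `(a,p)` with `c p = c (M a)`.  Suppose `H (k+1)` is obtained from `H k` by
(repeatedly) applying the pruning rule: every deleted edge `(a'', p')` is justified by
some agent `a` whose current top neighbor `p` satisfies that `a` prefers `p'` to `p` and
`p'` prefers `a` to `a''`.  Then no edge of `M` is ever deleted, and at every stage each
agent's top remaining neighbor is weakly preferred (by that agent) to its `M`-partner. -/
theorem stmt19 {A P : Type*}
    (list : A → Finset P) (rankA : A → P → ℕ) (rankP : P → A → ℕ) (c : P → ℕ)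
    (M : A → P)
    (hMedge : ∀ a, M a ∈ list a)                       -- M is A-perfect, along edges
    (hMstable : ¬ ∃ a p, p ∈ list a ∧ rankA a p < rankA a (M a) ∧
      ∃ a', M a' = p ∧ rankP p a < rankP p a')          -- M is stable
    (H : ℕ → A → P → Prop)                              -- the pruning process
    (hH0 : ∀ a p, H 0 a p ↔ p ∈ list a ∧ c p = c (M a)) -- H₀: edges of matching cost
    (hmono : ∀ k a p, H (k + 1) a p → H k a p)          -- edges are only deleted
    (hjust : ∀ k a'' p', H k a'' p' → ¬ H (k + 1) a'' p' →
      ∃ a p, H k a p ∧ (∀ q, H k a q → rankA a p ≤ rankA a q) ∧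
        p' ∈ list a ∧ rankA a p' < rankA a p ∧ rankP p' a < rankP p' a'') :
    (∀ k a, H k a (M a)) ∧                              -- no M-edge is ever deleted
    (∀ k a p, H k a p → (∀ q, H k a q → rankA a p ≤ rankA a q) →
      rankA a p ≤ rankA a (M a)) := by                  -- top neighbor ≥ M-partner
  have key : ∀ k a, H k a (M a) := by
    intro k
    induction k with
    | zero => intro a; exact (hH0 a (M a)).mpr ⟨hMedge a, rfl⟩
    | succ k ih =>
      intro a
      by_contra hnot
      obtain ⟨a₀, p, hp, htop, hmem, hlt, hrk⟩ := hjust k a (M a) (ih a) hnot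
      exact hMstable ⟨a₀, M a, hmem, lt_of_lt_of_le hlt (htop _ (ih a₀)),
        a, rfl, hrk⟩
  exact ⟨key, fun k a p _ htop => htop _ (key k a)⟩
end
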